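/- Let I be a stable monomial ideal of S = K[x_1,...,x_n] with max{ m(u) : u ∈ G(I) } = |G(I)|. Then I is a Gotzmann ideal and |G(I)| ≤ n. -/

import Mathlib

/-!
Background definitions: monomial ideals, minimal monomial generators, stable / lexsegment /
universal lexsegment ideals, (graded) Betti numbers `β_{i}` and `β_{ij}` of an ideal
(via Koszul homology, using `Tor_i^S(M,K) ≅ H_i(x_1,…,x_n; M)` as graded vector spaces),
Gotzmann and componentwise linear ideals, generic initial ideals, grade and
projective dimension.
-/

open MvPolynomial

namespace Formalization

variable {K : Type} [Field K] {σ : Type} [Fintype σ] [LinearOrder σ] {n : ℕ}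

/-- The total degree of an exponent vector (the degree of the corresponding monomial). -/
def edeg (d : σ →₀ ℕ) : ℕ := d.sum fun _ k => k

/-- An ideal of the polynomial ring is a *monomial ideal* if it is generated by monomials. -/
def IsMonomialIdeal (I : Ideal (MvPolynomial σ K)) : Prop :=
  ∃ A : Set (σ →₀ ℕ), I = Ideal.span ((fun d => (monomial d (1 : K))) '' A)

/-- `G(I)`: the (exponent vectors of the) unique minimal system of monomial generators of a
monomial ideal `I`, i.e. the monomials of `I` having no proper monomial divisor in `I`. -/
def minGens (I : Ideal (MvPolynomial σ K)) : Set (σ →₀ ℕ) :=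
  {d | monomial d (1 : K) ∈ I ∧
    ∀ e : σ →₀ ℕ, e ≤ d → e ≠ d → monomial e (1 : K) ∉ I}

/-- `m(u)`: the largest index (1-indexed, as in `x_1, …, x_n`) of a variable dividing the
monomial with exponent vector `u`. -/
def mdeg (d : Fin n →₀ ℕ) : ℕ := d.support.sup fun i => (i : ℕ) + 1

/-- `m_i(I) = |{u ∈ G(I) : m(u) = i}|`. -/
noncomputable def mcount (I : Ideal (MvPolynomial (Fin n) K)) (i : ℕ) : ℕ :=
  {u ∈ minGens I | mdeg u = i}.ncard

/-- A monomial ideal is *stable* if for every monomial `u ∈ I` with largest variable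
index `j = m(u)` and every `i < j`, the monomial `x_i · u / x_j` belongs to `I`. -/
def IsStable (I : Ideal (MvPolynomial σ K)) : Prop :=
  IsMonomialIdeal I ∧
    ∀ d : σ →₀ ℕ, monomial d (1 : K) ∈ I →
      ∀ j ∈ d.support, (∀ k ∈ d.support, k ≤ j) →
        ∀ i : σ, i < j →
          monomial (d + Finsupp.single i 1 - Finsupp.single j 1) (1 : K) ∈ I

/-- `u <_lex v` for the lexicographic order induced by `x_1 > x_2 > ⋯`:
at the smallest index where the exponent vectors differ, `v` has the larger exponent. -/
def lexLt (u v : σ →₀ ℕ) : Prop :=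
  ∃ i : σ, (∀ j : σ, j < i → u j = v j) ∧ u i < v i

/-- A monomial ideal `I` is *lexsegment* if `u ∈ I`, `deg v = deg u` and `v ≥_lex u`
imply `v ∈ I`. -/
def IsLexsegment (I : Ideal (MvPolynomial σ K)) : Prop :=
  IsMonomialIdeal I ∧
    ∀ u v : σ →₀ ℕ, monomial u (1 : K) ∈ I → edeg v = edeg u →
      (lexLt u v ∨ u = v) → monomial v (1 : K) ∈ I

/-- A lexsegment ideal `I ⊆ K[x_1,…,x_n]` is *universal lexsegment* if for every `m ≥ 1` the
extension ideal of `K[x_1,…,x_{n+m}]` generated by `I` (equivalently, by the minimal monomial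
generators of `I`) is again lexsegment. -/
def IsUniversalLex (I : Ideal (MvPolynomial (Fin n) K)) : Prop :=
  IsLexsegment I ∧
    ∀ m : ℕ, 1 ≤ m →
      IsLexsegment (Ideal.map (rename (R := K) (Fin.castLE (Nat.le_add_right n m))) I)

/-- An ideal is homogeneous if it contains all homogeneous components of its elements. -/
def IsHomogeneousIdeal (I : Ideal (MvPolynomial σ K)) : Prop :=
  ∀ p ∈ I, ∀ j : ℕ, homogeneousComponent j p ∈ I

/-- The homogeneous component of degree `d ∈ ℤ` of an ideal `I`, as a `K`-subspace:
the homogeneous polynomials of degree `d` belonging to `I` (zero if `d < 0`). -/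
def hdeg (I : Ideal (MvPolynomial σ K)) (d : ℤ) : Submodule K (MvPolynomial σ K) where
  carrier := {p | p = 0 ∨ (p ∈ I ∧ ∃ e : ℕ, (e : ℤ) = d ∧ p.IsHomogeneous e)}
  zero_mem' := Or.inl rfl
  add_mem' := by
    rintro p q (rfl | ⟨hpI, e, he, hpe⟩) (rfl | ⟨hqI, e', he', hqe⟩)
    · simp
    · simpa using Or.inr ⟨‹_›, e', he', hqe⟩
    · simpa using Or.inr ⟨hpI, e, he, hpe⟩
    · refine Or.inr ⟨add_mem hpI hqI, e, he, hpe.add ?_⟩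
      obtain rfl : e' = e := by omega
      exact hqe
  smul_mem' := by
    rintro c p (rfl | ⟨hpI, e, he, hpe⟩)
    · exact Or.inl (smul_zero c)
    · refine Or.inr ⟨?_, e, he, ?_⟩
      · simpa [smul_eq_C_mul] using Ideal.mul_mem_left I _ hpI
      · simpa [smul_eq_C_mul] using (isHomogeneous_C σ c).mul hpe

/-- Two ideals have the same Hilbert function. -/
def HilbertEq (I L : Ideal (MvPolynomial σ K)) : Prop :=
  ∀ d : ℕ, Module.rank K (hdeg I (d : ℤ)) = Module.rank K (hdeg L (d : ℤ))

/-! ### Betti numbers via Koszul homology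

For a module `M` over `S = K[x_1,…,x_n]` one has `Tor_i^S(M, K) ≅ H_i(x_1,…,x_n; M)`,
the `i`-th homology of the Koszul complex with coefficients in `M`, compatibly with the
grading.  We use this to define the Betti numbers `β_i(I) = dim_K Tor_i^S(I, K)` and the
graded Betti numbers `β_{ij}(I) = dim_K Tor_i^S(I, K)_j` of an ideal `I`. -/

/-- The space of `i`-th Koszul chains with polynomial coefficients: functions on the
`i`-element subsets of the variables (a basis of `Λ^i S^n`). -/
abbrev KChain (σ K : Type) [Fintype σ] [LinearOrder σ] [Field K] (i : ℕ) : Type :=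
  {s : Finset σ // s.card = i} → MvPolynomial σ K

/-- The Koszul differential `K_{i+1} → K_i`. -/
noncomputable def KD (i : ℕ) (f : KChain σ K (i + 1)) : KChain σ K i :=
  fun t => ∑ a ∈ (t.1)ᶜ.attach,
    ((-1 : K) ^ (t.1.filter (fun b => b < a.1)).card) •
      (X a.1 * f ⟨insert a.1 t.1, by
        rw [Finset.card_insert_of_notMem (Finset.mem_compl.mp a.2), t.2]⟩)

/-- The `K`-subspace of Koszul `i`-cycles with coefficients in a `K`-subspace `V ⊆ S`. -/
noncomputable def KZ (V : Submodule K (MvPolynomial σ K)) (i : ℕ) :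
    Submodule K (KChain σ K i) where
  carrier := {f | (∀ s, f s ∈ V) ∧
    ∀ (t : Finset σ) (ht : t.card + 1 = i),
      ∑ a ∈ tᶜ.attach,
        ((-1 : K) ^ (t.filter (fun b => b < a.1)).card) •
          (X a.1 * f ⟨insert a.1 t, by
            rw [Finset.card_insert_of_notMem (Finset.mem_compl.mp a.2)]; exact ht⟩) = 0}
  zero_mem' := by
    refine ⟨fun s => zero_mem V, fun t ht => ?_⟩
    simp
  add_mem' := by
    rintro f g ⟨hf1, hf2⟩ ⟨hg1, hg2⟩
    refine ⟨fun s => add_mem (hf1 s) (hg1 s), fun t ht => ?_⟩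
    simp only [Pi.add_apply, mul_add, smul_add, Finset.sum_add_distrib,
      hf2 t ht, hg2 t ht, add_zero]
  smul_mem' := by
    rintro c f ⟨hf1, hf2⟩
    refine ⟨fun s => Submodule.smul_mem V c (hf1 s), fun t ht => ?_⟩
    have h := hf2 t ht
    calc ∑ a ∈ tᶜ.attach,
        ((-1 : K) ^ (t.filter (fun b => b < a.1)).card) •
          (X a.1 * (c • f) ⟨insert a.1 t, by
            rw [Finset.card_insert_of_notMem (Finset.mem_compl.mp a.2)]; exact ht⟩)
        = c • ∑ a ∈ tᶜ.attach,
          ((-1 : K) ^ (t.filter (fun b => b < a.1)).card) •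
            (X a.1 * f ⟨insert a.1 t, by
              rw [Finset.card_insert_of_notMem (Finset.mem_compl.mp a.2)]; exact ht⟩) := by
          rw [Finset.smul_sum]
          refine Finset.sum_congr rfl fun a _ => ?_
          rw [Pi.smul_apply, mul_smul_comm, smul_comm]
      _ = 0 := by rw [h, smul_zero]

/-- The `K`-subspace of Koszul `i`-boundaries coming from `(i+1)`-chains with coefficients
in a `K`-subspace `W ⊆ S`. -/
noncomputable def KB (W : Submodule K (MvPolynomial σ K)) (i : ℕ) :
    Submodule K (KChain σ K i) :=
  Submodule.span K (KD i '' {f | ∀ s, f s ∈ W})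

/-- The dimension of the `i`-th Koszul homology of the subcomplex of Koszul chains with
coefficients in `V i` in homological degree `i`. -/
noncomputable def koszulBetti (V : ℕ → Submodule K (MvPolynomial σ K)) (i : ℕ) : Cardinal :=
  Module.rank K
    (↥(KZ (V i) i) ⧸ (Submodule.comap (KZ (V i) i).subtype (KB (V (i + 1)) i)))

/-- The `i`-th total Betti number `β_i(I) = dim_K Tor_i^S(I, K)` of an ideal `I`, computed
as the `i`-th Koszul homology of `I`. -/
noncomputable def betti (I : Ideal (MvPolynomial σ K)) (i : ℕ) : Cardinal :=
  koszulBetti (fun _ => I.restrictScalars K) i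

/-- The graded Betti number `β_{ij}(I) = dim_K Tor_i^S(I, K)_j` of an ideal `I`, computed as
the degree-`j` strand of the `i`-th Koszul homology of `I` (the Koszul generator `e_{l_1} ∧ ⋯
∧ e_{l_k}` sits in internal degree `k`, so the coefficients in homological degree `k` lie in
the degree `j - k` component of `I`). -/
noncomputable def bettiGr (I : Ideal (MvPolynomial σ K)) (i j : ℕ) : Cardinal :=
  koszulBetti (fun k => hdeg I ((j : ℤ) - (k : ℤ))) i

/-- A homogeneous ideal `I` is *Gotzmann* if `β_{ij}(I) = β_{ij}(I^lex)` for all `i, j`, where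
`I^lex` is the (unique) lexsegment ideal with the same Hilbert function as `I`. -/
def IsGotzmann (I : Ideal (MvPolynomial σ K)) : Prop :=
  ∀ L : Ideal (MvPolynomial σ K), IsLexsegment L → HilbertEq I L →
    ∀ i j : ℕ, bettiGr I i j = bettiGr L i j

/-- `I_{⟨j⟩}`: the ideal generated by the degree-`j` homogeneous elements of `I`. -/
noncomputable def componentIdeal (I : Ideal (MvPolynomial σ K)) (j : ℕ) : Ideal (MvPolynomial σ K) :=
  Ideal.span {p | p ∈ I ∧ p.IsHomogeneous j}

/-- A homogeneous ideal `I` is *componentwise linear* if for each `j` the ideal `I_{⟨j⟩}` has a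
linear resolution, i.e. its graded Betti numbers `β_{ik}` vanish for `k ≠ i + j`. -/
def IsComponentwiseLinear (I : Ideal (MvPolynomial σ K)) : Prop :=
  ∀ j i k : ℕ, k ≠ i + j → bettiGr (componentIdeal I j) i k = 0

/-- `u <_revlex v` in the degree reverse lexicographic order induced by `x_1 > ⋯ > x_n`:
either `deg u < deg v`, or the degrees agree and at the *largest* index where the exponent
vectors differ, `u` has the larger exponent. -/
def revlexLt (u v : σ →₀ ℕ) : Prop :=
  (edeg u < edeg v) ∨
    (edeg u = edeg v ∧ ∃ i : σ, v i < u i ∧ ∀ j : σ, i < j → u j = v j)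

/-- `d` is the exponent vector of the leading monomial of `p` for the revlex order. -/
def IsLeadMonomial (p : MvPolynomial σ K) (d : σ →₀ ℕ) : Prop :=
  d ∈ p.support ∧ ∀ e ∈ p.support, e ≠ d → revlexLt e d

/-- The initial ideal with respect to the reverse lexicographic order. -/
noncomputable def initialIdeal (I : Ideal (MvPolynomial σ K)) : Ideal (MvPolynomial σ K) :=
  Ideal.span {q | ∃ p ∈ I, ∃ d : σ →₀ ℕ, IsLeadMonomial p d ∧ q = monomial d (1 : K)}

/-- The linear change of coordinates associated to a matrix `g`. -/
noncomputable def linChange (g : Matrix (Fin n) (Fin n) K) :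
    MvPolynomial (Fin n) K →ₐ[K] MvPolynomial (Fin n) K :=
  aeval fun i => ∑ j, g i j • X j

/-- `J = Gin(I)`, the generic initial ideal of `I` with respect to the reverse lexicographic
order: `J = in(g·I)` for all `g` in a nonempty Zariski-open subset of `GL_n(K)`. -/
def IsGin (I J : Ideal (MvPolynomial (Fin n) K)) : Prop :=
  ∃ f : MvPolynomial (Fin n × Fin n) K,
    (∃ g : Matrix (Fin n) (Fin n) K, IsUnit g.det ∧ eval (fun p => g p.1 p.2) f ≠ 0) ∧
    ∀ g : Matrix (Fin n) (Fin n) K, IsUnit g.det →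
      eval (fun p => g p.1 p.2) f ≠ 0 →
        initialIdeal (Ideal.map (linChange g) I) = J

/-- `grade I = g`: `I` contains a regular sequence (on `S`) of length `g` and none of
length `g + 1`. -/
def HasGrade (I : Ideal (MvPolynomial σ K)) (g : ℕ) : Prop :=
  (∃ rs : List (MvPolynomial σ K), rs.length = g ∧ (∀ r ∈ rs, r ∈ I) ∧
      RingTheory.Sequence.IsRegular (MvPolynomial σ K) rs) ∧
    ¬ ∃ rs : List (MvPolynomial σ K), rs.length = g + 1 ∧ (∀ r ∈ rs, r ∈ I) ∧
      RingTheory.Sequence.IsRegular (MvPolynomial σ K) rs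

open CategoryTheory in
/-- The projective dimension of a module is at most `p`: there is a projective resolution
vanishing beyond `p`. -/
def ProjDimLE {R : Type} [CommRing R] (M : ModuleCat R) (p : ℕ) : Prop :=
  ∃ P : ProjectiveResolution M, ∀ i : ℕ, p < i → Limits.IsZero (P.complex.X i)

/-- The projective dimension of a module equals `p`. -/
def ProjDimEq {R : Type} [CommRing R] (M : ModuleCat R) (p : ℕ) : Prop :=
  ProjDimLE M p ∧ ∀ q : ℕ, q < p → ¬ ProjDimLE M q

/-- `I` is a complete intersection: it is generated by a regular sequence. -/
def IsCompleteIntersection (I : Ideal (MvPolynomial σ K)) : Prop :=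
  ∃ rs : List (MvPolynomial σ K),
    RingTheory.Sequence.IsRegular (MvPolynomial σ K) rs ∧ I = Ideal.ofList rs

end Formalization

/-!
Let `u ∈ G(I)` with `m(u) = |G(I)| = k`, so `x_k` is the last variable of `u`. By stability,
`x_p u / x_k ∈ I` for each `p < k`, and a minimal generator `v_p` dividing it must exceed `u`
exactly in `x_p`; the `v_p` are distinct and different from `u`, so by the count
`G(I) = {u, v_1, …, v_{k-1}}`. Applying stability to the `v_p` themselves, and using that no
generator of this list divides the result, forces
`v_p = x_1^{a_1} ⋯ x_{p-1}^{a_{p-1}} x_p^{a_p + 1}` for `u = x_1^{a_1} ⋯ x_k^{a_k}`. Hence a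
monomial lies in `I` iff its truncation to `x_1, …, x_k` is lexicographically at least `u`, so
`I` is a lexsegment ideal. It is then the unique lexsegment ideal with its Hilbert function, so
`I^lex = I` and `I` is Gotzmann.
-/

namespace Formalization

variable {K : Type} [Field K] {σ : Type} {n : ℕ}

section MinGens

variable {I : Ideal (MvPolynomial σ K)}

theorem monomial_mem_of_le {a d : σ →₀ ℕ} (h : a ≤ d) (ha : monomial a (1 : K) ∈ I) :
    monomial d (1 : K) ∈ I := by
  rw [← tsub_add_cancel_of_le h, ← one_mul (1 : K), ← monomial_mul]
  exact I.mul_mem_left _ ha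

theorem eq_of_le_of_mem_minGens {u v : σ →₀ ℕ} (hu : u ∈ minGens I) (hv : v ∈ minGens I)
    (h : v ≤ u) : v = u :=
  by_contra fun hne => hu.2 v h hne hv.1

theorem isAntichain_minGens : IsAntichain (· ≤ ·) (minGens I) :=
  fun _ hu _ hv hne h => hne (eq_of_le_of_mem_minGens hv hu h)

theorem minGens_finite [Finite σ] : (minGens I).Finite :=
  WellQuasiOrderedLE.finite_of_isAntichain isAntichain_minGens

theorem exists_mem_minGens_le {d : σ →₀ ℕ} (hd : monomial d (1 : K) ∈ I) :
    ∃ a ∈ minGens I, a ≤ d := by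
  obtain ⟨a, ⟨had, ha⟩, hmin⟩ :=
    wellFounded_lt.has_min {e | e ≤ d ∧ monomial e (1 : K) ∈ I} ⟨d, le_rfl, hd⟩
  refine ⟨a, ⟨ha, fun e hea hne he => ?_⟩, had⟩
  exact hmin e ⟨hea.trans had, he⟩ (lt_of_le_of_ne hea hne)

theorem monomial_mem_iff_exists_minGens_le {d : σ →₀ ℕ} :
    monomial d (1 : K) ∈ I ↔ ∃ a ∈ minGens I, a ≤ d :=
  ⟨exists_mem_minGens_le, fun ⟨_, ha, h⟩ => monomial_mem_of_le h ha.1⟩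

end MinGens

section MonomialIdeal

variable {I L : Ideal (MvPolynomial σ K)}

theorem IsMonomialIdeal.mem_iff (hI : IsMonomialIdeal I) {p : MvPolynomial σ K} :
    p ∈ I ↔ ∀ d ∈ p.support, monomial d (1 : K) ∈ I := by
  obtain ⟨A, rfl⟩ := hI
  classical
  simp only [mem_ideal_span_monomial_image, support_monomial, one_ne_zero, if_false,
    Finset.mem_singleton, forall_eq]

theorem IsMonomialIdeal.ext (hI : IsMonomialIdeal I) (hL : IsMonomialIdeal L)
    (h : ∀ d, monomial d (1 : K) ∈ I ↔ monomial d (1 : K) ∈ L) : I = L :=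
  Ideal.ext fun p => by rw [hI.mem_iff, hL.mem_iff]; simp only [h]

def monomialsOfDegree (I : Ideal (MvPolynomial σ K)) (t : ℕ) : Set (σ →₀ ℕ) :=
  {d | monomial d (1 : K) ∈ I ∧ edeg d = t}

theorem monomialsOfDegree_finite [Finite σ] (I : Ideal (MvPolynomial σ K)) (t : ℕ) :
    (monomialsOfDegree I t).Finite :=
  (Finsupp.finite_of_degree_eq t).subset fun _ hd => hd.2

theorem IsMonomialIdeal.hdeg_eq_span (hI : IsMonomialIdeal I) (t : ℕ) :
    hdeg I t = Submodule.span K ((fun d => monomial d (1 : K)) '' monomialsOfDegree I t) := by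
  apply le_antisymm
  · rintro p (rfl | ⟨hpI, e, he, hpe⟩)
    · exact zero_mem _
    obtain rfl : e = t := by exact_mod_cast he
    rw [p.as_sum]
    refine Submodule.sum_mem _ fun d hd => ?_
    rw [← mul_one (coeff d p), ← smul_eq_mul, ← smul_monomial]
    refine Submodule.smul_mem _ _
      (Submodule.subset_span ⟨d, ⟨hI.mem_iff.1 hpI d hd, ?_⟩, rfl⟩)
    change d.degree = _
    rw [Finsupp.degree_eq_weight_one]
    exact hpe (mem_support_iff.1 hd)
  · rw [Submodule.span_le]
    rintro _ ⟨d, ⟨hdI, hdt⟩, rfl⟩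
    exact Or.inr ⟨hdI, t, rfl, isHomogeneous_monomial _ hdt⟩

theorem IsMonomialIdeal.rank_hdeg (hI : IsMonomialIdeal I) (t : ℕ) :
    Module.rank K (hdeg I t) = Cardinal.mk (monomialsOfDegree I t) := by
  have hindep : LinearIndependent K fun d : σ →₀ ℕ => monomial d (1 : K) := by
    simpa using (basisMonomials σ K).linearIndependent
  rw [hI.hdeg_eq_span, rank_span_set (hindep.linearIndepOn _).id_image,
    Cardinal.mk_image_eq (monomial_left_injective one_ne_zero)]

end MonomialIdeal

section Lex

variable [LinearOrder σ] {I L : Ideal (MvPolynomial σ K)}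

theorem IsLexsegment.monomialsOfDegree_total (hI : IsLexsegment I) (hL : IsLexsegment L)
    (t : ℕ) : monomialsOfDegree I t ⊆ monomialsOfDegree L t ∨
      monomialsOfDegree L t ⊆ monomialsOfDegree I t := by
  by_contra! h
  obtain ⟨⟨x, ⟨hxI, hxt⟩, hxL⟩, ⟨y, ⟨hyL, hyt⟩, hyI⟩⟩ :=
    And.imp Set.not_subset.1 Set.not_subset.1 h
  rcases lt_trichotomy (toLex x) (toLex y) with hxy | hxy | hxy
  · exact hyI ⟨hI.2 x y hxI (hyt.trans hxt.symm) (Or.inl hxy), hyt⟩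
  · exact hyI (toLex.injective hxy ▸ ⟨hxI, hxt⟩)
  · exact hxL ⟨hL.2 y x hyL (hxt.trans hyt.symm) (Or.inl hxy), hxt⟩

theorem IsLexsegment.eq_of_hilbertEq [Finite σ] (hI : IsLexsegment I) (hL : IsLexsegment L)
    (h : HilbertEq I L) : I = L := by
  have hcard (t : ℕ) : (monomialsOfDegree I t).ncard = (monomialsOfDegree L t).ncard := by
    have := congrArg Cardinal.toNat (h t)
    rwa [hI.1.rank_hdeg, hL.1.rank_hdeg, ← Nat.card, ← Nat.card, Nat.card_coe_set_eq,
      Nat.card_coe_set_eq] at this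
  have heq (t : ℕ) : monomialsOfDegree I t = monomialsOfDegree L t := by
    rcases hI.monomialsOfDegree_total hL t with hsub | hsub
    · exact Set.eq_of_subset_of_ncard_le hsub (hcard t).ge (monomialsOfDegree_finite L t)
    · exact (Set.eq_of_subset_of_ncard_le hsub (hcard t).le (monomialsOfDegree_finite I t)).symm
  refine hI.1.ext hL.1 fun d => ?_
  have := Set.ext_iff.1 (heq (edeg d)) d
  simpa [monomialsOfDegree] using this

theorem IsLexsegment.isGotzmann [Fintype σ] (hI : IsLexsegment I) : IsGotzmann I :=
  fun L hL h i j => by rw [hI.eq_of_hilbertEq hL h]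

theorem toLex_filter_le_toLex_filter {a b : σ →₀ ℕ} (h : toLex a ≤ toLex b) (k : σ) :
    toLex (a.filter (· ≤ k)) ≤ toLex (b.filter (· ≤ k)) := by
  obtain h | h := h.eq_or_lt
  · rw [toLex.injective h]
  obtain ⟨i, hbelow, hi⟩ := Finsupp.Lex.lt_iff.1 h
  simp only [ofLex_toLex] at hbelow hi
  by_cases hik : i ≤ k
  · refine le_of_lt (Finsupp.Lex.lt_iff.2 ⟨i, fun j hj => ?_, ?_⟩)
    · simp [Finsupp.filter_apply, hbelow j hj]
    · simpa [Finsupp.filter_apply, hik] using hi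
  · refine le_of_eq (congrArg toLex (Finsupp.ext fun j => ?_))
    by_cases hjk : j ≤ k
    · simp [hjk, hbelow j (hjk.trans_lt (not_le.1 hik))]
    · simp [hjk]

end Lex

section AddSingleSubSingle

variable {i j : σ} (d : σ →₀ ℕ)

theorem add_single_sub_single_apply_left (hij : i ≠ j) :
    (d + Finsupp.single i 1 - Finsupp.single j 1 : σ →₀ ℕ) i = d i + 1 := by
  simp [hij.symm]

theorem add_single_sub_single_apply_right (hij : i ≠ j) :
    (d + Finsupp.single i 1 - Finsupp.single j 1 : σ →₀ ℕ) j = d j - 1 := by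
  simp [hij]

theorem add_single_sub_single_apply_le {l : σ} (hli : l ≠ i) :
    (d + Finsupp.single i 1 - Finsupp.single j 1 : σ →₀ ℕ) l ≤ d l := by
  simp [hli.symm]

end AddSingleSubSingle

theorem apply_eq_of_mem_minGens_of_le_add_single {I : Ideal (MvPolynomial σ K)}
    {u v : σ →₀ ℕ} {p : σ} (hu : u ∈ minGens I) (hv : v ∈ minGens I)
    (hle : v ≤ u + Finsupp.single p 1) (hne : v ≠ u) :
    v p = u p + 1 ∧ ∀ i ≠ p, v i ≤ u i := by
  classical
  have hoff : ∀ i ≠ p, v i ≤ u i := fun i hi => by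
    simpa [Finsupp.single_apply, hi.symm] using hle i
  have hvu : ¬ v p ≤ u p := fun hp =>
    hne (eq_of_le_of_mem_minGens hu hv fun i => if hi : i = p then hi ▸ hp else hoff i hi)
  exact ⟨le_antisymm (by simpa using hle p) (not_le.1 hvu), hoff⟩

section Stable

variable [LinearOrder σ] {I : Ideal (MvPolynomial σ K)} {u : σ →₀ ℕ} {k : σ}

theorem IsStable.exists_minGens_of_lt (hI : IsStable I) (hu : u ∈ minGens I)
    (hk : k ∈ u.support) (hkmax : ∀ i ∈ u.support, i ≤ k) {p : σ} (hp : p < k) :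
    ∃ v ∈ minGens I, v p = u p + 1 ∧ (∀ i ≠ p, v i ≤ u i) ∧ v k < u k := by
  obtain ⟨v, hv, hvle⟩ := exists_mem_minGens_le (hI.2 u hu.1 k hk hkmax p hp)
  have hvk : v k < u k := by
    have h1 := hvle k
    rw [add_single_sub_single_apply_right _ hp.ne] at h1
    have h2 := Finsupp.mem_support_iff.1 hk
    omega
  have hne : v ≠ u := by rintro rfl; omega
  obtain ⟨hvp, hvle'⟩ :=
    apply_eq_of_mem_minGens_of_le_add_single hu hv (hvle.trans tsub_le_self) hne
  exact ⟨v, hv, hvp, hvle', hvk⟩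

structure Staircase (I : Ideal (MvPolynomial σ K)) (u : σ →₀ ℕ) (k : σ)
    (v : σ → σ →₀ ℕ) : Prop where
  minGens_eq : minGens I = insert u (v '' Set.Iio k)
  support_le : ∀ i ∈ u.support, i ≤ k
  apply_self : ∀ p < k, v p p = u p + 1
  apply_le : ∀ p < k, ∀ i ≠ p, v p i ≤ u i
  apply_last_lt : ∀ p < k, v p k < u k

theorem IsStable.exists_staircase [Finite σ] (hI : IsStable I) (hu : u ∈ minGens I)
    (hk : k ∈ u.support) (hkmax : ∀ i ∈ u.support, i ≤ k)
    (hcard : (minGens I).ncard ≤ (Set.Iio k).ncard + 1) : ∃ v, Staircase I u k v := by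
  choose! v hvG hvp hvle hvk using fun p (hp : p < k) => hI.exists_minGens_of_lt hu hk hkmax hp
  have hinj : Set.InjOn v (Set.Iio k) := fun p hp q hq hpq => by_contra fun hne => by
    have := hvle q hq p hne
    rw [← hpq, hvp p hp] at this
    omega
  have hu' : u ∉ v '' Set.Iio k := by
    rintro ⟨p, hp, hpu⟩
    have := hvp p hp
    rw [hpu] at this
    omega
  refine ⟨v, (Set.eq_of_subset_of_ncard_le ?_ ?_ minGens_finite).symm, hkmax, hvp, hvle, hvk⟩
  · rintro _ (rfl | ⟨p, hp, rfl⟩)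
    exacts [hu, hvG p hp]
  · rwa [Set.ncard_insert_of_notMem hu', hinj.ncard_image]

end Stable

namespace Staircase

variable [LinearOrder σ] {I : Ideal (MvPolynomial σ K)} {u : σ →₀ ℕ} {k p : σ}
  {v : σ → σ →₀ ℕ}

theorem mem_minGens (hS : Staircase I u k v) (hp : p < k) : v p ∈ minGens I :=
  hS.minGens_eq ▸ Or.inr ⟨p, hp, rfl⟩

theorem monomial_mem_iff (hS : Staircase I u k v) {w : σ →₀ ℕ} :
    monomial w (1 : K) ∈ I ↔ u ≤ w ∨ ∃ p < k, v p ≤ w := by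
  rw [monomial_mem_iff_exists_minGens_le, hS.minGens_eq]
  simp

-- If `x_j` is the last variable of `v p` and `j > p`, then `x_p v_p / x_j ∈ I` by stability,
-- yet none of the generators `u`, `v q` divides it.
theorem apply_eq_zero_of_lt (hS : Staircase I u k v) (hI : IsStable I) (hp : p < k) {i : σ}
    (hpi : p < i) : v p i = 0 := by
  by_contra hi
  have hne : (v p).support.Nonempty := ⟨i, Finsupp.mem_support_iff.2 hi⟩
  set j := (v p).support.max' hne
  have hj : j ∈ (v p).support := Finset.max'_mem _ _
  have hpj : p < j := hpi.trans_le ((v p).support.le_max' i (Finsupp.mem_support_iff.2 hi))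
  have hw := hI.2 _ (hS.mem_minGens hp).1 j hj (fun l hl => (v p).support.le_max' l hl) p hpj
  rcases hS.monomial_mem_iff.1 hw with hle | ⟨q, hq, hle⟩
  · have h1 := hle k
    have h2 := add_single_sub_single_apply_le (v p) (j := j) hp.ne'
    have h3 := hS.apply_last_lt p hp
    omega
  rcases eq_or_ne q p with rfl | hqp
  · have h1 := hle j
    rw [add_single_sub_single_apply_right _ hpj.ne] at h1
    have h2 := Finsupp.mem_support_iff.1 hj
    omega
  · have h1 := hle q
    have h2 := add_single_sub_single_apply_le (v p) (j := j) hqp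
    have h3 := hS.apply_le p hp q hqp
    have h4 := hS.apply_self q hq
    omega

-- Otherwise `x_i v_p / x_p ∈ I` by stability, yet none of the generators `u`, `v q` divides it.
theorem apply_eq_of_lt (hS : Staircase I u k v) (hI : IsStable I) (hp : p < k) {i : σ}
    (hip : i < p) : v p i = u i := by
  by_contra hne
  have hlt : v p i < u i := lt_of_le_of_ne (hS.apply_le p hp i hip.ne) hne
  have hpmax : ∀ l ∈ (v p).support, l ≤ p := fun l hl =>
    not_lt.1 fun hpl => Finsupp.mem_support_iff.1 hl (hS.apply_eq_zero_of_lt hI hp hpl)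
  have hpsupp : p ∈ (v p).support := by
    rw [Finsupp.mem_support_iff, hS.apply_self p hp]
    omega
  have hw := hI.2 _ (hS.mem_minGens hp).1 p hpsupp hpmax i hip
  rcases hS.monomial_mem_iff.1 hw with hle | ⟨q, hq, hle⟩
  · have h1 := hle k
    have h2 := add_single_sub_single_apply_le (v p) (j := p) (hip.trans hp).ne'
    have h3 := hS.apply_last_lt p hp
    omega
  rcases eq_or_ne q i with rfl | hqi
  · have h1 := hle q
    rw [add_single_sub_single_apply_left _ hip.ne] at h1
    have h2 := hS.apply_self q hq
    omega
  rcases eq_or_ne q p with rfl | hqp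
  · have h1 := hle q
    rw [add_single_sub_single_apply_right _ hip.ne] at h1
    have h2 := hS.apply_self q hq
    omega
  · have h1 := hle q
    have h2 := add_single_sub_single_apply_le (v p) (j := p) hqi
    have h3 := hS.apply_le p hp q hqp
    have h4 := hS.apply_self q hq
    omega

theorem toLex_lt_toLex (hS : Staircase I u k v) (hI : IsStable I) (hp : p < k) :
    toLex u < toLex (v p) :=
  Finsupp.Lex.lt_iff.2 ⟨p, fun _ hj => (hS.apply_eq_of_lt hI hp hj).symm, by
    simp [hS.apply_self p hp]⟩

theorem filter_le_eq_self (hS : Staircase I u k v) : u.filter (· ≤ k) = u :=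
  (Finsupp.filter_eq_self_iff _ _).2 fun i hi => hS.support_le i (Finsupp.mem_support_iff.2 hi)

theorem filter_le_eq_self_of_lt (hS : Staircase I u k v) (hI : IsStable I) (hp : p < k) :
    (v p).filter (· ≤ k) = v p :=
  (Finsupp.filter_eq_self_iff _ _).2 fun _ hi =>
    (not_lt.1 fun hpi => hi (hS.apply_eq_zero_of_lt hI hp hpi)).trans hp.le

theorem toLex_le_of_monomial_mem (hS : Staircase I u k v) (hI : IsStable I) {b : σ →₀ ℕ}
    (hb : monomial b (1 : K) ∈ I) : toLex u ≤ toLex (b.filter (· ≤ k)) := by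
  rcases hS.monomial_mem_iff.1 hb with hub | ⟨p, hp, hvb⟩
  · exact hS.filter_le_eq_self ▸ toLex_filter_le_toLex_filter (Finsupp.toLex_monotone hub) k
  · refine (hS.toLex_lt_toLex hI hp).le.trans ?_
    exact hS.filter_le_eq_self_of_lt hI hp ▸
      toLex_filter_le_toLex_filter (Finsupp.toLex_monotone hvb) k

theorem monomial_mem_of_toLex_le (hS : Staircase I u k v) (hI : IsStable I) {b : σ →₀ ℕ}
    (h : toLex u ≤ toLex (b.filter (· ≤ k))) : monomial b (1 : K) ∈ I := by
  rw [hS.monomial_mem_iff]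
  obtain h | h := h.eq_or_lt
  · refine Or.inl fun i => ?_
    rw [toLex.injective h, Finsupp.filter_apply]
    split_ifs
    exacts [le_rfl, Nat.zero_le _]
  obtain ⟨j, hbelow, hj⟩ := Finsupp.Lex.lt_iff.1 h
  simp only [ofLex_toLex, Finsupp.filter_apply] at hbelow hj
  have hjk : j ≤ k := by
    by_contra hjk
    simp [hjk] at hj
  rw [if_pos hjk] at hj
  obtain hjk | rfl := hjk.lt_or_eq
  · refine Or.inr ⟨j, hjk, fun i => ?_⟩
    rcases lt_trichotomy i j with hij | rfl | hij
    · rw [hS.apply_eq_of_lt hI hjk hij, hbelow i hij, if_pos (hij.le.trans hjk.le)]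
    · rw [hS.apply_self i hjk]
      exact hj
    · rw [hS.apply_eq_zero_of_lt hI hjk hij]
      exact Nat.zero_le _
  · refine Or.inl fun i => ?_
    rcases lt_trichotomy i j with hij | rfl | hij
    · rw [hbelow i hij, if_pos hij.le]
    · exact hj.le
    · rw [Finsupp.notMem_support_iff.1 fun hi => not_lt.2 (hS.support_le i hi) hij]
      exact Nat.zero_le _

theorem isLexsegment (hS : Staircase I u k v) (hI : IsStable I) : IsLexsegment I := by
  refine ⟨hI.1, fun a b ha _ hab => hS.monomial_mem_of_toLex_le hI ?_⟩
  have hab : toLex a ≤ toLex b := hab.elim (fun h => le_of_lt (b := toLex b) h) (· ▸ le_rfl)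
  exact (hS.toLex_le_of_monomial_mem hI ha).trans (toLex_filter_le_toLex_filter hab k)

end Staircase

theorem mdeg_le (d : Fin n →₀ ℕ) : mdeg d ≤ n :=
  Finset.sup_le fun i _ => i.isLt

theorem mdeg_eq_max'_add_one {d : Fin n →₀ ℕ} (hd : d.support.Nonempty) :
    mdeg d = d.support.max' hd + 1 :=
  le_antisymm (Finset.sup_le fun i hi => by simpa using d.support.le_max' i hi)
    (Finset.le_sup (f := fun i : Fin n => (i : ℕ) + 1) (d.support.max'_mem hd))

theorem IsStable.isLexsegment_of_mdeg_eq_ncard {I : Ideal (MvPolynomial (Fin n) K)}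
    (hI : IsStable I) {u : Fin n →₀ ℕ} (hu : u ∈ minGens I)
    (hmd : mdeg u = (minGens I).ncard) : IsLexsegment I := by
  have hpos : 0 < mdeg u := hmd ▸ (Set.ncard_pos minGens_finite).2 ⟨u, hu⟩
  have hne : u.support.Nonempty := Finset.nonempty_iff_ne_empty.2 fun h => by
    simp [mdeg, h] at hpos
  have hcard : (minGens I).ncard ≤ (Set.Iio (u.support.max' hne)).ncard + 1 := by
    rw [← hmd, mdeg_eq_max'_add_one hne, ← Finset.coe_Iio, Set.ncard_coe_finset, Fin.card_Iio]
  obtain ⟨v, hS⟩ :=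
    hI.exists_staircase hu (u.support.max'_mem hne) (u.support.le_max' · ·) hcard
  exact hS.isLexsegment hI

theorem stable_max_mdeg_eq_card_gotzmann_general {K : Type} [Field K] {n : ℕ}
    (I : Ideal (MvPolynomial (Fin n) K)) (hI : IsStable I)
    (hmax : ∃ u ∈ minGens I, mdeg u = (minGens I).ncard) :
    IsGotzmann I ∧ (minGens I).ncard ≤ n := by
  obtain ⟨u, hu, hmd⟩ := hmax
  exact ⟨(hI.isLexsegment_of_mdeg_eq_ncard hu hmd).isGotzmann, hmd ▸ mdeg_le u⟩

/-- Let `I` be a stable monomial ideal of `S = K[x_1,…,x_n]` with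
`max{ m(u) : u ∈ G(I) } = |G(I)|`.  Then `I` is a Gotzmann ideal and `|G(I)| ≤ n`. -/
theorem stable_max_mdeg_eq_card_gotzmann {K : Type} [Field K] {n : ℕ}
    (I : Ideal (MvPolynomial (Fin n) K)) (hI : IsStable I)
    (hle : ∀ u ∈ minGens I, mdeg u ≤ (minGens I).ncard)
    (hmax : ∃ u ∈ minGens I, mdeg u = (minGens I).ncard) :
    IsGotzmann I ∧ (minGens I).ncard ≤ n :=
  stable_max_mdeg_eq_card_gotzmann_general I hI hmax

end Formalization
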